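/- Existence of ACUN normal forms: every term t is ACUN-equal either to the constant 0 or to a sum x₁⊕…⊕xₙ (n ≥ 1) of pairwise distinct terms x₁, …, xₙ, none of which has head symbol ⊕ and none of which is the constant 0. -/

import Mathlib

/-- First-order terms: variables, constants, a distinguished constant `0`,
free symbols `seq` (pairing), `senc`, `penc`, `sh` (binary), `pk` (unary),
and the binary operator `⊕` (`xor`). -/
inductive Term : Type
  | var : ℕ → Term
  | const : ℕ → Term
  | zero : Term
  | seq : Term → Term → Term
  | senc : Term → Term → Term
  | penc : Term → Term → Term
  | sh : Term → Term → Term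
  | pk : Term → Term
  | xor : Term → Term → Term
deriving DecidableEq

/-- A substitution maps variables to terms and acts homomorphically. -/
def Term.subst (σ : ℕ → Term) : Term → Term
  | var n => σ n
  | const n => const n
  | zero => zero
  | seq s t => seq (s.subst σ) (t.subst σ)
  | senc s t => senc (s.subst σ) (t.subst σ)
  | penc s t => penc (s.subst σ) (t.subst σ)
  | sh s t => sh (s.subst σ) (t.subst σ)
  | pk t => pk (t.subst σ)
  | xor s t => xor (s.subst σ) (t.subst σ)

/-- `Eqv E` is the smallest congruence relation on terms containing every
substitution instance of every equation in `E`. -/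
inductive Eqv (E : Set (Term × Term)) : Term → Term → Prop
  | ax {s t : Term} (h : (s, t) ∈ E) (σ : ℕ → Term) :
      Eqv E (s.subst σ) (t.subst σ)
  | refl (t : Term) : Eqv E t t
  | symm {s t : Term} : Eqv E s t → Eqv E t s
  | trans {s t u : Term} : Eqv E s t → Eqv E t u → Eqv E s u
  | seq_congr {s s' t t' : Term} :
      Eqv E s s' → Eqv E t t' → Eqv E (.seq s t) (.seq s' t')
  | senc_congr {s s' t t' : Term} :
      Eqv E s s' → Eqv E t t' → Eqv E (.senc s t) (.senc s' t')
  | penc_congr {s s' t t' : Term} :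
      Eqv E s s' → Eqv E t t' → Eqv E (.penc s t) (.penc s' t')
  | sh_congr {s s' t t' : Term} :
      Eqv E s s' → Eqv E t t' → Eqv E (.sh s t) (.sh s' t')
  | pk_congr {t t' : Term} : Eqv E t t' → Eqv E (.pk t) (.pk t')
  | xor_congr {s s' t t' : Term} :
      Eqv E s s' → Eqv E t t' → Eqv E (.xor s t) (.xor s' t')

/-- `m` and `t` are `E`-unifiable if some substitution makes them `E`-equal. -/
def Unifiable (E : Set (Term × Term)) (m t : Term) : Prop :=
  ∃ σ : ℕ → Term, Eqv E (m.subst σ) (t.subst σ)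

/-- The theory `Std`: trivial equations for the free function symbols. -/
def Std : Set (Term × Term) :=
  { (.seq (.var 0) (.var 1), .seq (.var 0) (.var 1)),
    (.senc (.var 0) (.var 1), .senc (.var 0) (.var 1)),
    (.penc (.var 0) (.var 1), .penc (.var 0) (.var 1)),
    (.sh (.var 0) (.var 1), .sh (.var 0) (.var 1)),
    (.pk (.var 0), .pk (.var 0)) }

/-- The theory `Free⊕`: the trivial equation `x ⊕ y = x ⊕ y`. -/
def FreeXor : Set (Term × Term) :=
  { (.xor (.var 0) (.var 1), .xor (.var 0) (.var 1)) }

/-- The theory `ACUN`: associativity, commutativity, unit `0`, nilpotence. -/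
def ACUN : Set (Term × Term) :=
  { (.xor (.xor (.var 0) (.var 1)) (.var 2), .xor (.var 0) (.xor (.var 1) (.var 2))),
    (.xor (.var 0) (.var 1), .xor (.var 1) (.var 0)),
    (.xor (.var 0) .zero, .var 0),
    (.xor (.var 0) (.var 0), .zero) }

/-- A term is `⊕`-headed if its head symbol is `⊕`. -/
def Term.isXorHead : Term → Prop
  | .xor _ _ => True
  | _ => False

/-- `xorSum x [x₂, …, xₙ]` is the (left-parenthesized) sum `x ⊕ x₂ ⊕ … ⊕ xₙ`. -/
def xorSum (x : Term) (l : List Term) : Term :=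
  l.foldl Term.xor x

section Aux

/-!
Because `⊕` is associative and commutative with unit `0` and `x ⊕ x = 0`, a sum is determined
up to ACUN by the set of summands that occur an odd number of times. Reading a term as the list of
its non-`⊕` summands and toggling each one in or out of an accumulator computes that set, and
each toggle is an ACUN step: adding `a` to a sum that already contains `a` cancels both copies.
-/

section Laws

variable (a b c : Term)

theorem acun_xor_assoc : Eqv ACUN ((a.xor b).xor c) (a.xor (b.xor c)) :=
  Eqv.ax (s := .xor (.xor (.var 0) (.var 1)) (.var 2)) (t := .xor (.var 0) (.xor (.var 1) (.var 2)))
    (by simp [ACUN]) fun | 0 => a | 1 => b | _ => c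

theorem acun_xor_comm : Eqv ACUN (a.xor b) (b.xor a) :=
  Eqv.ax (s := .xor (.var 0) (.var 1)) (t := .xor (.var 1) (.var 0))
    (by simp [ACUN]) fun | 0 => a | _ => b

theorem acun_xor_zero : Eqv ACUN (a.xor .zero) a :=
  Eqv.ax (s := .xor (.var 0) .zero) (t := .var 0) (by simp [ACUN]) fun _ => a

theorem acun_xor_self : Eqv ACUN (a.xor a) .zero :=
  Eqv.ax (s := .xor (.var 0) (.var 0)) (t := .zero) (by simp [ACUN]) fun _ => a

theorem acun_zero_xor : Eqv ACUN (Term.zero.xor a) a :=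
  (acun_xor_comm _ _).trans (acun_xor_zero a)

theorem acun_xor_left_comm : Eqv ACUN (a.xor (b.xor c)) (b.xor (a.xor c)) :=
  (acun_xor_assoc a b c).symm.trans
    ((Eqv.xor_congr (acun_xor_comm a b) (.refl c)).trans (acun_xor_assoc b a c))

theorem acun_xor_xor_cancel_left : Eqv ACUN (a.xor (a.xor b)) b :=
  (acun_xor_assoc a a b).symm.trans
    ((Eqv.xor_congr (acun_xor_self a) (.refl b)).trans (acun_zero_xor b))

end Laws

def xorList (l : List Term) : Term :=
  l.foldr Term.xor .zero

theorem xorList_perm {l₁ l₂ : List Term} (h : l₁.Perm l₂) :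
    Eqv ACUN (xorList l₁) (xorList l₂) := by
  induction h with
  | nil => exact .refl _
  | cons a _ ih => exact .xor_congr (.refl a) ih
  | swap a b l => exact acun_xor_left_comm b a (xorList l)
  | trans _ _ ih₁ ih₂ => exact ih₁.trans ih₂

theorem xorList_cons_eqv_xorSum (x : Term) (xs : List Term) :
    Eqv ACUN (xorList (x :: xs)) (xorSum x xs) := by
  induction xs generalizing x with
  | nil => exact acun_xor_zero x
  | cons a xs ih => exact (acun_xor_assoc x a (xorList xs)).symm.trans (ih (x.xor a))

/-- Symmetric difference of `l` with `{a}`. -/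
def toggle {α : Type*} [DecidableEq α] (a : α) (l : List α) : List α :=
  if a ∈ l then l.erase a else a :: l

section Toggle

variable {α : Type*} [DecidableEq α]

theorem toggle_subset (a : α) (l : List α) : toggle a l ⊆ a :: l := by
  unfold toggle
  split_ifs
  · exact List.Subset.trans List.erase_subset (List.subset_cons_self a l)
  · exact List.Subset.refl _

theorem nodup_toggle (a : α) {l : List α} (h : l.Nodup) : (toggle a l).Nodup := by
  unfold toggle
  split_ifs with ha
  · exact h.erase a
  · exact h.cons ha

theorem foldr_toggle_subset (l₁ l₂ : List α) : l₁.foldr toggle l₂ ⊆ l₁ ++ l₂ := by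
  induction l₁ with
  | nil => exact List.Subset.refl _
  | cons a l ih =>
    exact List.Subset.trans (toggle_subset a _) (List.cons_subset_cons a ih)

theorem nodup_foldr_toggle (l₁ : List α) {l₂ : List α} (h : l₂.Nodup) :
    (l₁.foldr toggle l₂).Nodup := by
  induction l₁ with
  | nil => exact h
  | cons a l ih => exact nodup_toggle a ih

end Toggle

theorem xorList_toggle (a : Term) (l : List Term) :
    Eqv ACUN (xorList (toggle a l)) (a.xor (xorList l)) := by
  unfold toggle
  split_ifs with ha
  · have hperm : Eqv ACUN (xorList l) (a.xor (xorList (l.erase a))) :=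
      xorList_perm (List.perm_cons_erase ha)
    exact ((acun_xor_xor_cancel_left a _).symm.trans (.xor_congr (.refl a) hperm.symm))
  · exact .refl _

theorem xorList_foldr_toggle (l₁ l₂ : List Term) :
    Eqv ACUN (xorList (l₁.foldr toggle l₂)) ((xorList l₁).xor (xorList l₂)) := by
  induction l₁ with
  | nil => exact (acun_zero_xor _).symm
  | cons a l ih =>
    exact (xorList_toggle a _).trans
      ((Eqv.xor_congr (.refl a) ih).trans (acun_xor_assoc a _ _).symm)

def Term.IsXorAtom (u : Term) : Prop :=
  ¬ u.isXorHead ∧ u ≠ .zero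

def Term.oddSummands : Term → List Term
  | .zero => []
  | .xor s t => s.oddSummands.foldr toggle t.oddSummands
  | t => [t]

theorem Term.oddSummands_of_isXorAtom {t : Term} (h : t.IsXorAtom) : t.oddSummands = [t] := by
  cases t <;> simp_all [IsXorAtom, isXorHead, oddSummands]

theorem Term.nodup_oddSummands (t : Term) : t.oddSummands.Nodup := by
  induction t
  case zero => exact List.nodup_nil
  case xor s t _ iht => exact nodup_foldr_toggle _ iht
  all_goals
    rw [oddSummands_of_isXorAtom (by simp [IsXorAtom, isXorHead])]
    exact List.nodup_singleton _

theorem Term.isXorAtom_of_mem_oddSummands {t u : Term} (h : u ∈ t.oddSummands) :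
    u.IsXorAtom := by
  induction t
  case zero => simp [oddSummands] at h
  case xor s t ihs iht =>
    rcases List.mem_append.1 (foldr_toggle_subset _ _ h) with hs | ht
    exacts [ihs hs, iht ht]
  all_goals
    rw [oddSummands_of_isXorAtom (by simp [IsXorAtom, isXorHead]), List.mem_singleton] at h
    subst h
    simp [IsXorAtom, isXorHead]

theorem Term.eqv_xorList_oddSummands (t : Term) : Eqv ACUN t (xorList t.oddSummands) := by
  induction t
  case zero => exact .refl _
  case xor s t ihs iht => exact (Eqv.xor_congr ihs iht).trans (xorList_foldr_toggle _ _).symm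
  all_goals
    rw [oddSummands_of_isXorAtom (by simp [IsXorAtom, isXorHead])]
    exact (acun_xor_zero _).symm

/-- Existence of ACUN normal forms: every term is ACUN-equal to `0` or to a
sum of pairwise distinct, non-`⊕`-headed, nonzero terms. -/
theorem acun_normal_form_exists (t : Term) :
    Eqv ACUN t Term.zero ∨
      ∃ (x : Term) (xs : List Term),
        (∀ u ∈ x :: xs, ¬ u.isXorHead ∧ u ≠ Term.zero) ∧
        (x :: xs).Pairwise (· ≠ ·) ∧
        Eqv ACUN t (xorSum x xs) := by
  have hnodup := t.nodup_oddSummands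
  have hatoms : ∀ u ∈ t.oddSummands, u.IsXorAtom := fun _ => Term.isXorAtom_of_mem_oddSummands
  have heqv := t.eqv_xorList_oddSummands
  match hl : t.oddSummands with
  | [] => exact Or.inl (by rwa [hl] at heqv)
  | x :: xs =>
    rw [hl] at hnodup hatoms heqv
    exact Or.inr ⟨x, xs, hatoms, hnodup, heqv.trans (xorList_cons_eqv_xorSum x xs)⟩
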